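/- arXiv:2005.13051 — 4 statements merged into one kernel-verified Lean document; each statement's English description precedes it below -/
import Mathlib

section
/- Let G be a finite abelian group, a : G → ℝ≥0 with a(0) ≥ 1 (e.g., a(0) = 1), y : G → ℝ≥0, and j ≥ 1 an integer. Define R(i) = y(i) / (∑_{k ∈ G} a(k) * y(i - k)), with the convention 0/0 = 0. Then ∑_{i ∈ G} R(i) * y(i)^j ≥ (1 / ∑_{k ∈ G} a(k)) * ∑_{i ∈ G} y(i)^j. -/
/-!
Write `D i = ∑ k, a k * y (i - k)`, so that `R i = y i / D i`; as `y i ≤ a 0 * y i ≤ D i`,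
`R i * D i = y i` holds even where `D i = 0`.
Cauchy–Schwarz with the weights `R i * y i ^ j` and `y i ^ j / R i = y i ^ (j - 1) * D i` gives
`(∑ y ^ j) ^ 2 ≤ (∑ R * y ^ j) * (∑ y ^ (j - 1) * D)`. Since `y ^ (j - 1)` and `y` are similarly
ordered, the rearrangement inequality bounds each shifted sum `∑ i, y i ^ (j - 1) * y (i - k)`
by `∑ y ^ j`, hence `∑ y ^ (j - 1) * D ≤ (∑ a) * ∑ y ^ j`; cancelling one factor `∑ y ^ j`
finishes the proof.
-/

open Finset

section Interference

variable {G α : Type*} [AddGroup G] [Fintype G]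

theorem sum_pow_mul_comp_sub_le_sum_pow_succ [Semiring α] [LinearOrder α] [IsStrictOrderedRing α]
    [ExistsAddOfLE α] {y : G → α} (hy : ∀ i, 0 ≤ y i) (n : ℕ) (k : G) :
    ∑ i, y i ^ n * y (i - k) ≤ ∑ i, y i ^ (n + 1) := by
  have hmono : Monovary (fun i => y i ^ n) y := fun p _ h => pow_le_pow_left₀ (hy p) h.le n
  simpa only [pow_succ, Equiv.subRight_apply] using
    hmono.sum_mul_comp_perm_le_sum_mul (σ := Equiv.subRight k)

theorem sum_pow_mul_sum_mul_comp_sub_le [CommSemiring α] [LinearOrder α] [IsStrictOrderedRing α]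
    [ExistsAddOfLE α] {a y : G → α} (ha : ∀ k, 0 ≤ a k) (hy : ∀ i, 0 ≤ y i) (n : ℕ) :
    ∑ i, y i ^ n * ∑ k, a k * y (i - k) ≤ (∑ k, a k) * ∑ i, y i ^ (n + 1) :=
  calc ∑ i, y i ^ n * ∑ k, a k * y (i - k)
      = ∑ k, a k * ∑ i, y i ^ n * y (i - k) := by
        simp_rw [mul_sum, mul_left_comm (y _ ^ n)]
        exact sum_comm
    _ ≤ ∑ k, a k * ∑ i, y i ^ (n + 1) := by
        refine sum_le_sum fun k _ => ?_
        exact mul_le_mul_of_nonneg_left (sum_pow_mul_comp_sub_le_sum_pow_succ hy n k) (ha k)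
    _ = (∑ k, a k) * ∑ i, y i ^ (n + 1) := (sum_mul ..).symm

end Interference

theorem sq_sum_pow_succ_le_sum_mul_mul_sum {ι α : Type*} [Fintype ι] [CommSemiring α]
    [LinearOrder α] [IsStrictOrderedRing α] [ExistsAddOfLE α] {y R D : ι → α}
    (hy : ∀ i, 0 ≤ y i) (hR : ∀ i, 0 ≤ R i) (hD : ∀ i, 0 ≤ D i) (hRD : ∀ i, R i * D i = y i)
    (n : ℕ) :
    (∑ i, y i ^ (n + 1)) ^ 2 ≤ (∑ i, R i * y i ^ (n + 1)) * ∑ i, y i ^ n * D i := by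
  refine sum_sq_le_sum_mul_sum_of_sq_le_mul _
    (fun i _ => mul_nonneg (hR i) (pow_nonneg (hy i) _))
    (fun i _ => mul_nonneg (pow_nonneg (hy i) _) (hD i)) fun i _ => le_of_eq ?_
  rw [← hRD i]
  ring

theorem stmt_2 {G : Type*} [AddCommGroup G] [Fintype G]
    (a y : G → NNReal) (ha : 1 ≤ a 0) (j : ℕ) (hj : 1 ≤ j)
    (R : G → NNReal) (hR : ∀ i, R i = y i / (∑ k : G, a k * y (i - k))) :
    (1 / ∑ k : G, a k) * ∑ i : G, y i ^ j ≤ ∑ i : G, R i * y i ^ j := by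
  obtain ⟨n, rfl⟩ : ∃ n, j = n + 1 := ⟨j - 1, by omega⟩
  have hyD : ∀ i, y i ≤ ∑ k, a k * y (i - k) := fun i =>
    calc y i ≤ a 0 * y (i - 0) := by rw [sub_zero]; exact le_mul_of_one_le_left zero_le ha
      _ ≤ _ := single_le_sum (f := fun k => a k * y (i - k)) (fun _ _ => zero_le) (mem_univ 0)
  have hRD : ∀ i, R i * ∑ k, a k * y (i - k) = y i := fun i => by
    rw [hR]
    exact div_mul_cancel_of_imp fun hD => nonpos_iff_eq_zero.mp ((hyD i).trans_eq hD)
  have hCS := sq_sum_pow_succ_le_sum_mul_mul_sum (fun _ => zero_le) (fun _ => zero_le)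
    (fun _ => zero_le) hRD n
  grw [sum_pow_mul_sum_mul_comp_sub_le (fun _ => zero_le) (fun _ => zero_le) n] at hCS
  set S := ∑ i, y i ^ (n + 1)
  have hS : S ≤ (∑ k, a k) * ∑ i, R i * y i ^ (n + 1) := by
    rcases eq_zero_or_pos S with hS0 | hS0
    · simp [hS0]
    · refine le_of_mul_le_mul_right ?_ hS0
      calc S * S = S ^ 2 := (sq S).symm
        _ ≤ _ := hCS
        _ = _ := by ring
  rw [one_div_mul_eq_div]
  exact NNReal.div_le_of_le_mul' hS
end

section
/- Let D > 0 and let (μ_k)_{k ≥ 0} be a sequence of nonnegative reals with μ₀ = 1 satisfying, for all integers k ≥ 1, D * (k+1) * μ_k ≤ ∑_{j=0}^{k-1} binomial(k+1, j) * μ_j. Then for every real c ≥ 0 with c * exp(c) < D and every m ∈ ℕ, the partial sum S_m = ∑_{j=0}^{m} c^j μ_j / j! satisfies S_m ≤ D / (D − c * exp(c)). -/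
/-!
Put `f j = c ^ j μ j / j!`. Multiplying the recurrence at `k` by `c ^ k / (k + 1)!` turns it into
the convolution inequality `D f k ≤ ∑_{j<k} f j · c ^ (k - j) / (k - j + 1)!`. Summing over
`1 ≤ k ≤ m` and swapping the order of summation, the inner sums are partial sums of
`∑_{t ≥ 1} c ^ t / (t + 1)! ≤ c e ^ c`, so `D (S_m - 1) ≤ c e ^ c S_m`, which rearranges to the bound.
-/

open Finset Nat Real

theorem sum_convolution_le_mul_sum {a b : ℕ → ℝ} {B : ℝ} (ha : ∀ j, 0 ≤ a j)
    (hb : ∀ n, ∑ t ∈ range n, b (t + 1) ≤ B) (m : ℕ) :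
    ∑ k ∈ range m, ∑ j ∈ range (k + 1), a j * b (k + 1 - j) ≤ B * ∑ j ∈ range m, a j := by
  have hswap : ∑ k ∈ range m, ∑ j ∈ range (k + 1), a j * b (k + 1 - j) =
      ∑ j ∈ range m, a j * ∑ t ∈ range (m - j), b (t + 1) := by
    have hmem : ∀ k j, k ∈ range m ∧ j ∈ range (k + 1) ↔ k ∈ Ico j m ∧ j ∈ range m := by
      intro k j
      simp only [mem_range, mem_Ico]
      omega
    rw [sum_comm' hmem]
    refine sum_congr rfl fun j _ => ?_
    rw [sum_Ico_eq_sum_range, mul_sum]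
    refine sum_congr rfl fun t _ => ?_
    rw [show j + t + 1 - j = t + 1 by omega]
  rw [hswap, mul_sum]
  exact sum_le_sum fun j _ => (mul_le_mul_of_nonneg_left (hb _) (ha j)).trans_eq (mul_comm _ _)

theorem sum_pow_succ_div_factorial_le_mul_exp {c : ℝ} (hc : 0 ≤ c) (n : ℕ) :
    ∑ t ∈ range n, c ^ (t + 1) / (t + 2)! ≤ c * exp c :=
  calc ∑ t ∈ range n, c ^ (t + 1) / (t + 2)!
      ≤ ∑ t ∈ range n, c * (c ^ t / t !) := sum_le_sum fun t _ => by
        rw [_root_.pow_succ', mul_div_assoc']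
        exact div_le_div_of_nonneg_left (by positivity) (by positivity)
          (by exact_mod_cast factorial_le (by omega))
    _ = c * ∑ t ∈ range n, c ^ t / t ! := (mul_sum _ _ _).symm
    _ ≤ c * exp c := mul_le_mul_of_nonneg_left (sum_le_exp_of_nonneg hc n) hc

theorem mul_pow_div_factorial_le_convolution {D c : ℝ} {μ : ℕ → ℝ} (hc : 0 ≤ c) {k : ℕ}
    (h : D * (k + 1) * μ k ≤ ∑ j ∈ range k, ((k + 1).choose j : ℝ) * μ j) :
    D * (c ^ k * μ k / k !) ≤
      ∑ j ∈ range k, c ^ j * μ j / j ! * (c ^ (k - j) / (k - j + 1)!) := by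
  have hscale : 0 ≤ c ^ k / (k + 1)! := by positivity
  calc D * (c ^ k * μ k / k !) = D * (k + 1) * μ k * (c ^ k / (k + 1)!) := by
        rw [factorial_succ]; push_cast; field_simp
    _ ≤ ∑ j ∈ range k, ((k + 1).choose j : ℝ) * μ j * (c ^ k / (k + 1)!) := by
        rw [← sum_mul]; exact mul_le_mul_of_nonneg_right h hscale
    _ = _ := sum_congr rfl fun j hj => by
        have hjk : j ≤ k := (mem_range.1 hj).le
        rw [cast_choose ℝ (hjk.trans k.le_succ), show k + 1 - j = k - j + 1 by omega,
          ← Nat.add_sub_cancel' hjk, pow_add, Nat.add_sub_cancel_left]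
        field_simp

theorem stmt_5_general (D : ℝ) (μ : ℕ → ℝ) (hμ : ∀ k, 0 ≤ μ k) (h0 : μ 0 = 1)
    (hrec : ∀ k : ℕ, 1 ≤ k →
      D * (k + 1) * μ k ≤ ∑ j ∈ Finset.range k, (Nat.choose (k + 1) j : ℝ) * μ j)
    (c : ℝ) (hc : 0 ≤ c) (hcD : c * Real.exp c < D) (m : ℕ) :
    ∑ j ∈ Finset.range (m + 1), c ^ j * μ j / (Nat.factorial j : ℝ) ≤
      D / (D - c * Real.exp c) := by
  set f : ℕ → ℝ := fun j => c ^ j * μ j / (j ! : ℝ)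
  have hf : ∀ j, 0 ≤ f j := fun j => div_nonneg (mul_nonneg (pow_nonneg hc j) (hμ j)) (by positivity)
  have hf0 : f 0 = 1 := by simp [f, h0]
  have key : D * ∑ k ∈ range m, f (k + 1) ≤ c * exp c * ∑ j ∈ range m, f j :=
    calc D * ∑ k ∈ range m, f (k + 1)
        ≤ ∑ k ∈ range m, ∑ j ∈ range (k + 1), f j * (c ^ (k + 1 - j) / (k + 1 - j + 1)!) := by
          rw [mul_sum]
          exact sum_le_sum fun k _ => mul_pow_div_factorial_le_convolution hc (hrec _ k.succ_pos)
      _ ≤ _ := sum_convolution_le_mul_sum (b := fun t => c ^ t / (t + 1)!) hf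
          (sum_pow_succ_div_factorial_le_mul_exp hc) m
  have hpartial : ∑ j ∈ range m, f j ≤ ∑ k ∈ range m, f (k + 1) + 1 := by
    rw [← hf0, ← sum_range_succ', sum_range_succ]
    linarith [hf m]
  have hE : 0 ≤ c * exp c := mul_nonneg hc (exp_pos c).le
  change ∑ j ∈ range (m + 1), f j ≤ _
  rw [sum_range_succ', hf0, le_div_iff₀ (sub_pos.2 hcD)]
  linarith [mul_le_mul_of_nonneg_left hpartial hE]

theorem stmt_5 (D : ℝ) (hD : 0 < D) (μ : ℕ → ℝ) (hμ : ∀ k, 0 ≤ μ k) (h0 : μ 0 = 1)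
    (hrec : ∀ k : ℕ, 1 ≤ k →
      D * (k + 1) * μ k ≤ ∑ j ∈ Finset.range k, (Nat.choose (k + 1) j : ℝ) * μ j)
    (c : ℝ) (hc : 0 ≤ c) (hcD : c * Real.exp c < D) (m : ℕ) :
    ∑ j ∈ Finset.range (m + 1), c ^ j * μ j / (Nat.factorial j : ℝ) ≤
      D / (D - c * Real.exp c) :=
  stmt_5_general D μ hμ h0 hrec c hc hcD m
end

section
/- For every real c ≥ 0, every m ∈ ℕ, and every sequence (μ_j)_{j≥0} of nonnegative reals: ∑_{k=1}^{m} ∑_{j=0}^{k-1} (c^k μ_j) / (j! * (k+1−j)!) ≤ c * exp(c) * ∑_{j=0}^{m} (c^j μ_j) / j!. -/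
/-!
Swapping the order of summation, the coefficient of `μ j` on the left is
`c ^ j / j! * ∑_{j < k ≤ m} c ^ k / (k + 1 - j)!`; substituting `k = j + 1 + u` turns the
inner sum into `c ^ (j + 1) * ∑_u c ^ u / (u + 2)!`, and the last sum is at most `exp c`.
-/

open Finset Real

theorem sum_range_pow_div_factorial_add_two_le_exp {c : ℝ} (hc : 0 ≤ c) (n : ℕ) :
    ∑ u ∈ range n, c ^ u / ((u + 2).factorial : ℝ) ≤ exp c :=
  calc ∑ u ∈ range n, c ^ u / ((u + 2).factorial : ℝ)
      ≤ ∑ u ∈ range n, c ^ u / (u.factorial : ℝ) := by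
        gcongr
        omega
    _ ≤ exp c := sum_le_exp_of_nonneg hc n

theorem sum_Icc_pow_div_factorial_add_one_sub_le {c : ℝ} (hc : 0 ≤ c) (j m : ℕ) :
    ∑ k ∈ Icc (j + 1) m, c ^ k / ((k + 1 - j).factorial : ℝ) ≤ c * exp c * c ^ j := by
  have hshift : ∑ k ∈ Icc (j + 1) m, c ^ k / ((k + 1 - j).factorial : ℝ)
      = c ^ (j + 1) * ∑ u ∈ range (m + 1 - (j + 1)), c ^ u / ((u + 2).factorial : ℝ) := by
    rw [← Ico_add_one_right_eq_Icc, sum_Ico_eq_sum_range, mul_sum]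
    refine sum_congr rfl fun u _ => ?_
    rw [show j + 1 + u + 1 - j = u + 2 by omega, pow_add, mul_div_assoc]
  calc ∑ k ∈ Icc (j + 1) m, c ^ k / ((k + 1 - j).factorial : ℝ)
      ≤ c ^ (j + 1) * exp c := by
        rw [hshift]
        gcongr
        exact sum_range_pow_div_factorial_add_two_le_exp hc _
    _ = c * exp c * c ^ j := by ring

theorem stmt_6 (c : ℝ) (hc : 0 ≤ c) (μ : ℕ → ℝ) (hμ : ∀ j, 0 ≤ μ j) (m : ℕ) :
    ∑ k ∈ Finset.Icc 1 m, ∑ j ∈ Finset.range k,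
        c ^ k * μ j / ((Nat.factorial j : ℝ) * (Nat.factorial (k + 1 - j) : ℝ)) ≤
      c * Real.exp c * ∑ j ∈ Finset.range (m + 1), c ^ j * μ j / (Nat.factorial j : ℝ) := by
  calc ∑ k ∈ Icc 1 m, ∑ j ∈ range k,
        c ^ k * μ j / ((j.factorial : ℝ) * ((k + 1 - j).factorial : ℝ))
      = ∑ j ∈ range m, μ j / (j.factorial : ℝ) *
          ∑ k ∈ Icc (j + 1) m, c ^ k / ((k + 1 - j).factorial : ℝ) := by
        rw [sum_comm' (t' := range m) (s' := fun j => Icc (j + 1) m)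
          (fun k j => by simp only [mem_Icc, mem_range]; omega)]
        refine sum_congr rfl fun j _ => ?_
        rw [mul_sum]
        refine sum_congr rfl fun k _ => ?_
        field_simp
    _ ≤ ∑ j ∈ range m, μ j / (j.factorial : ℝ) * (c * exp c * c ^ j) := by
        gcongr with j
        · exact div_nonneg (hμ j) (Nat.cast_nonneg _)
        · exact sum_Icc_pow_div_factorial_add_one_sub_le hc j m
    _ = c * exp c * ∑ j ∈ range m, c ^ j * μ j / (j.factorial : ℝ) := by
        rw [mul_sum]
        refine sum_congr rfl fun j _ => ?_
        ring
    _ ≤ c * exp c * ∑ j ∈ range (m + 1), c ^ j * μ j / (j.factorial : ℝ) := by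
        gcongr
        · intro j _ _
          have := hμ j
          positivity
        · omega
end

section
/- Let D > 0 and (μ_k)_{k≥0} be nonnegative reals with μ₀ = 1 satisfying D(k+1)μ_k ≤ ∑_{j=0}^{k-1} binomial(k+1,j) μ_j for all k ≥ 1. Let X be a nonnegative integer-valued random variable with E[X^k] = μ_k for all k ≥ 0. Then for every c ≥ 0 with c e^c < D, E[exp(c X)] ≤ D/(D − c e^c) < ∞. -/
/-!
Write `t k = c ^ k μ_k / k!`. Multiplying the recursion at `k` by `c ^ k / (k + 1)!` turns it
into the renewal-type inequality `D t_k ≤ ∑_{j<k} t_j h_{k-j}` with kernel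
`h_i = c ^ i / (i + 1)!`, whose total mass is at most `c e^c`. Summing over `k < m` and
exchanging the order of summation gives `D S_m ≤ D + c e^c S_m` for the partial sums, so
`S_m ≤ D / (D - c e^c)`. Expanding `exp (c X)` in its Taylor series and integrating term by term
(monotone convergence) identifies `E[exp (c X)]` with `∑ t_k`.
-/

open MeasureTheory Finset
open scoped Nat

theorem sum_range_le_div_of_convolution_le {t h : ℕ → ℝ} {D E : ℝ}
    (ht : ∀ n, 0 ≤ t n) (ht0 : t 0 ≤ 1) (hh : ∀ n, ∑ i ∈ range n, h i ≤ E) (hED : E < D)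
    (hconv : ∀ n, D * t (n + 1) ≤ ∑ j ∈ range (n + 1), t j * h (n - j)) (m : ℕ) :
    ∑ k ∈ range m, t k ≤ D / (D - E) := by
  have hE : 0 ≤ E := by simpa using hh 0
  suffices D * ∑ k ∈ range m, t k ≤ D + E * ∑ k ∈ range m, t k by
    rw [le_div_iff₀ (by linarith)]; linarith
  cases m with
  | zero => simp only [range_zero, sum_empty, mul_zero]; linarith
  | succ m =>
    have hconv_sum : ∑ n ∈ range m, ∑ j ∈ range (n + 1), t j * h (n - j)
        ≤ E * ∑ k ∈ range m, t k := by
      refine (sum_range_diag_flip m fun j i => t j * h i).trans_le ?_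
      rw [mul_sum]
      gcongr with j
      rw [← mul_sum, mul_comm E]
      exact mul_le_mul_of_nonneg_left (hh _) (ht j)
    calc D * ∑ k ∈ range (m + 1), t k = D * t 0 + ∑ n ∈ range m, D * t (n + 1) := by
          rw [sum_range_succ', mul_add, mul_sum, add_comm]
      _ ≤ D + ∑ n ∈ range m, ∑ j ∈ range (n + 1), t j * h (n - j) :=
          add_le_add (by nlinarith) (sum_le_sum fun n _ => hconv n)
      _ ≤ D + E * ∑ k ∈ range m, t k := by linarith
      _ ≤ D + E * ∑ k ∈ range (m + 1), t k := by
          rw [sum_range_succ]; nlinarith [ht m]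

theorem sum_range_pow_succ_div_factorial_le {c : ℝ} (hc : 0 ≤ c) (n : ℕ) :
    ∑ i ∈ range n, c ^ (i + 1) / (i + 2)! ≤ c * Real.exp c := by
  calc ∑ i ∈ range n, c ^ (i + 1) / (i + 2)! ≤ ∑ i ∈ range n, c * (c ^ i / i !) := by
        gcongr with i
        rw [_root_.pow_succ', mul_div_assoc]
        gcongr
        omega
    _ ≤ c * Real.exp c := by
        rw [← mul_sum]; exact mul_le_mul_of_nonneg_left (Real.sum_le_exp_of_nonneg hc n) hc

theorem mul_taylor_coeff_le_convolution {D c : ℝ} (hc : 0 ≤ c) {μ : ℕ → ℝ} {n : ℕ}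
    (h : D * ((n + 1 : ℕ) + 1) * μ (n + 1)
      ≤ ∑ j ∈ range (n + 1), ((n + 1 + 1).choose j : ℝ) * μ j) :
    D * (c ^ (n + 1) / (n + 1)! * μ (n + 1))
      ≤ ∑ j ∈ range (n + 1), c ^ j / j ! * μ j * (c ^ (n - j + 1) / (n - j + 2)!) := by
  have hw : 0 ≤ c ^ (n + 1) / (n + 2)! := by positivity
  calc D * (c ^ (n + 1) / (n + 1)! * μ (n + 1))
      = D * ((n + 1 : ℕ) + 1) * μ (n + 1) * (c ^ (n + 1) / (n + 2)!) := by
        rw [Nat.factorial_succ (n + 1)]; push_cast; field_simp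
    _ ≤ (∑ j ∈ range (n + 1), ((n + 1 + 1).choose j : ℝ) * μ j) * (c ^ (n + 1) / (n + 2)!) :=
        mul_le_mul_of_nonneg_right h hw
    _ = _ := by
        rw [sum_mul]
        refine sum_congr rfl fun j hj => ?_
        have hjn : j ≤ n := Nat.lt_succ_iff.mp (mem_range.mp hj)
        have hpow : c ^ (n + 1) = c ^ j * c ^ (n - j + 1) := by
          rw [← pow_add]; congr 1; omega
        rw [Nat.cast_choose ℝ (by omega), show n + 1 + 1 - j = n - j + 2 by omega, hpow]
        field_simp

theorem lintegral_ofReal_exp_mul_eq_tsum_moments {Ω : Type*} [MeasurableSpace Ω] {μ : Measure Ω}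
    {Y : Ω → ℝ} (hY : ∀ ω, 0 ≤ Y ω) (hint : ∀ k : ℕ, Integrable (fun ω => Y ω ^ k) μ)
    {c : ℝ} (hc : 0 ≤ c) :
    ∫⁻ ω, ENNReal.ofReal (Real.exp (c * Y ω)) ∂μ
      = ∑' k : ℕ, ENNReal.ofReal (c ^ k / k ! * ∫ ω, Y ω ^ k ∂μ) := by
  have hexp : ∀ ω, ENNReal.ofReal (Real.exp (c * Y ω))
      = ∑' k : ℕ, ENNReal.ofReal (c ^ k / k !) * ENNReal.ofReal (Y ω ^ k) := fun ω => by
    have hsum : HasSum (fun k : ℕ => c ^ k / k ! * Y ω ^ k) (Real.exp (c * Y ω)) := by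
      simpa only [← Real.exp_eq_exp_ℝ, mul_pow, mul_div_right_comm]
        using NormedSpace.expSeries_div_hasSum_exp (c * Y ω)
    rw [← hsum.tsum_eq, ENNReal.ofReal_tsum_of_nonneg (fun k => by have := hY ω; positivity)
      hsum.summable]
    exact tsum_congr fun k => ENNReal.ofReal_mul (by positivity)
  simp_rw [hexp]
  rw [lintegral_tsum fun k => ((hint k).aemeasurable.ennreal_ofReal.const_mul _)]
  refine tsum_congr fun k => ?_
  rw [lintegral_const_mul'' _ (hint k).aemeasurable.ennreal_ofReal,
    ← ofReal_integral_eq_lintegral_ofReal (hint k) (ae_of_all _ fun ω => pow_nonneg (hY ω) k),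
    ← ENNReal.ofReal_mul (by positivity)]

theorem integrable_and_integral_le_of_lintegral_ofReal_le {Ω : Type*} [MeasurableSpace Ω]
    {μ : Measure Ω} {f : Ω → ℝ} (hfm : AEStronglyMeasurable f μ) (hf : 0 ≤ᵐ[μ] f) {B : ℝ}
    (hB : 0 ≤ B) (h : ∫⁻ ω, ENNReal.ofReal (f ω) ∂μ ≤ ENNReal.ofReal B) :
    Integrable f μ ∧ ∫ ω, f ω ∂μ ≤ B := by
  refine ⟨(lintegral_ofReal_ne_top_iff_integrable hfm hf).mp
    (ne_top_of_le_ne_top ENNReal.ofReal_ne_top h), ?_⟩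
  rw [integral_eq_lintegral_of_nonneg_ae hf hfm]
  exact ENNReal.toReal_le_of_le_ofReal hB h

theorem stmt_19_general {Ω : Type*} [MeasurableSpace Ω] (μmeas : Measure Ω)
    (D : ℝ) (μ : ℕ → ℝ) (hμ : ∀ k, 0 ≤ μ k) (h0 : μ 0 = 1)
    (hrec : ∀ k : ℕ, 1 ≤ k →
      D * (k + 1) * μ k ≤ ∑ j ∈ Finset.range k, (Nat.choose (k + 1) j : ℝ) * μ j)
    (X : Ω → ℕ)
    (hint : ∀ k : ℕ, Integrable (fun ω => ((X ω : ℝ)) ^ k) μmeas)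
    (hmom : ∀ k : ℕ, ∫ ω, ((X ω : ℝ)) ^ k ∂μmeas = μ k)
    (c : ℝ) (hc : 0 ≤ c) (hcD : c * Real.exp c < D) :
    Integrable (fun ω => Real.exp (c * X ω)) μmeas ∧
    ∫ ω, Real.exp (c * X ω) ∂μmeas ≤ D / (D - c * Real.exp c) := by
  have ht : ∀ k, 0 ≤ c ^ k / k ! * μ k := fun k => by have := hμ k; positivity
  have hpartial (m : ℕ) : ∑ k ∈ range m, c ^ k / k ! * μ k ≤ D / (D - c * Real.exp c) :=
    sum_range_le_div_of_convolution_le ht (by simp [h0]) (sum_range_pow_succ_div_factorial_le hc)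
      hcD (fun n => mul_taylor_coeff_le_convolution hc (hrec (n + 1) n.succ_pos)) m
  have hXm : AEStronglyMeasurable (fun ω => (X ω : ℝ)) μmeas := by simpa using (hint 1).1
  refine integrable_and_integral_le_of_lintegral_ofReal_le
    (by fun_prop) (ae_of_all _ fun ω => (Real.exp_pos _).le) (by simpa using hpartial 0) ?_
  rw [lintegral_ofReal_exp_mul_eq_tsum_moments (fun ω => (X ω).cast_nonneg) hint hc]
  simp_rw [hmom]
  refine ENNReal.tsum_le_of_sum_range_le fun m => ?_
  rw [← ENNReal.ofReal_sum_of_nonneg fun k _ => ht k]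
  exact ENNReal.ofReal_le_ofReal (hpartial m)

theorem stmt_19 {Ω : Type*} [MeasurableSpace Ω] (μmeas : Measure Ω) [IsProbabilityMeasure μmeas]
    (D : ℝ) (hD : 0 < D) (μ : ℕ → ℝ) (hμ : ∀ k, 0 ≤ μ k) (h0 : μ 0 = 1)
    (hrec : ∀ k : ℕ, 1 ≤ k →
      D * (k + 1) * μ k ≤ ∑ j ∈ Finset.range k, (Nat.choose (k + 1) j : ℝ) * μ j)
    (X : Ω → ℕ) (hX : Measurable X)
    (hint : ∀ k : ℕ, Integrable (fun ω => ((X ω : ℝ)) ^ k) μmeas)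
    (hmom : ∀ k : ℕ, ∫ ω, ((X ω : ℝ)) ^ k ∂μmeas = μ k)
    (c : ℝ) (hc : 0 ≤ c) (hcD : c * Real.exp c < D) :
    Integrable (fun ω => Real.exp (c * X ω)) μmeas ∧
    ∫ ω, Real.exp (c * X ω) ∂μmeas ≤ D / (D - c * Real.exp c) :=
  stmt_19_general μmeas D μ hμ h0 hrec X hint hmom c hc hcD
end
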